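/- arXiv:math/9602207 — 4 statements merged into one kernel-verified Lean document; each statement's English description precedes it below -/
import Mathlib

section
/- Let Γ : H²(H) → H²(H)* be a bounded Hankel operator, S the shift on H²(H), and define T_Γ on H²(H)* ⊕ H²(H) by the block matrix [[ᵗS, Γ],[0, S]]. If there is a constant C such that ‖Γ M_{P'}‖ ≤ C‖P‖_∞ for all polynomials P, then T_Γ is polynomially bounded: ‖P(T_Γ)‖ ≤ (1 + C)·‖P‖_∞ for all polynomials P. -/
set_option synthInstance.maxHeartbeats 1000000
set_option maxHeartbeats 1000000


open Polynomial

/-- `sup_{|z|=1} |P(z)|`. -/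
noncomputable def supCircle (P : Polynomial ℂ) : ℝ :=
  ⨆ z : Metric.sphere (0 : ℂ) 1, ‖P.eval (z : ℂ)‖

/-- The operator `T_Γ = [[ᵗS, Γ], [0, S]]` on `H²(H)* ⊕ H²(H)`; here `V` stands for the
Hardy space `H²(H)`, `S` for the shift, and `Γ : V → V*`. -/
noncomputable def TGamma {V : Type*} [NormedAddCommGroup V] [NormedSpace ℂ V]
    (S : V →L[ℂ] V) (Γ : V →L[ℂ] (V →L[ℂ] ℂ)) :
    ((V →L[ℂ] ℂ) × V) →L[ℂ] ((V →L[ℂ] ℂ) × V) :=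
  ((((ContinuousLinearMap.compL ℂ V V ℂ).flip S).comp
        (ContinuousLinearMap.fst ℂ (V →L[ℂ] ℂ) V)) +
      Γ.comp (ContinuousLinearMap.snd ℂ (V →L[ℂ] ℂ) V)).prod
    (S.comp (ContinuousLinearMap.snd ℂ (V →L[ℂ] ℂ) V))

lemma TGamma_apply {V : Type*} [NormedAddCommGroup V] [NormedSpace ℂ V]
    (S : V →L[ℂ] V) (Γ : V →L[ℂ] (V →L[ℂ] ℂ)) (f : V →L[ℂ] ℂ) (g : V) :
    TGamma S Γ (f, g) = (f.comp S + Γ g, S g) := by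
  simp [TGamma]

lemma key {V : Type*} [NormedAddCommGroup V] [NormedSpace ℂ V]
    (S : V →L[ℂ] V) (Γ : V →L[ℂ] (V →L[ℂ] ℂ))
    (hHankel : ∀ (φ : Polynomial ℂ) (g h : V),
      Γ ((Polynomial.aeval S φ) g) h = Γ g ((Polynomial.aeval S φ) h))
    (P : Polynomial ℂ) : ∀ (f : V →L[ℂ] ℂ) (g : V),
    (Polynomial.aeval (TGamma S Γ) P) (f, g) =
      (f.comp (Polynomial.aeval S P) + Γ ((Polynomial.aeval S (derivative P)) g),
        (Polynomial.aeval S P) g) := by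
  induction P using Polynomial.induction_on with
  | C a =>
    intro f g
    simp [Algebra.algebraMap_eq_smul_one, Prod.smul_mk]
    ext h; simp
  | add p q hp hq =>
    intro f g
    simp [map_add, hp f g, hq f g, Prod.add_def, ContinuousLinearMap.add_comp]
    abel
  | monomial n a hp =>
    intro f g
    have hQX : C a * X ^ (n + 1) = (C a * X ^ n) * X := by ring
    rw [hQX]
    set Q : ℂ[X] := C a * X ^ n with hQdef
    have hcomm : ∀ v : V, S ((aeval S Q) v) = (aeval S Q) (S v) := by
      intro v
      have h := (Commute.all (X : ℂ[X]) Q).map (aeval S)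
      have h2 := congrArg (fun A : V →L[ℂ] V => A v) h
      simpa [Commute, SemiconjBy, ContinuousLinearMap.mul_apply] using h2
    have hder : derivative (Q * X) = derivative Q * X + Q := by
      simp [derivative_mul]
    rw [map_mul, aeval_X, ContinuousLinearMap.mul_apply, TGamma_apply, hp (f.comp S + Γ g) (S g), hder]
    refine Prod.ext ?_ ?_
    · ext h
      simp [map_mul, map_add, ContinuousLinearMap.mul_apply, hcomm,
        hHankel Q g h]
      ring
    · simp [map_mul, ContinuousLinearMap.mul_apply]

/-- Let `Γ : H²(H) → H²(H)*` be a bounded Hankel operator (relative to the shift `S`, which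
satisfies von Neumann's inequality `‖P(S)‖ ≤ ‖P‖_∞`).  If `‖Γ M_{P'}‖ ≤ C ‖P‖_∞` for all
polynomials `P`, then the operator `T_Γ = [[ᵗS, Γ], [0, S]]` is polynomially bounded:
`‖P(T_Γ)‖ ≤ (1 + C) ‖P‖_∞`. -/
theorem TGamma_polynomially_bounded
    {V : Type*} [NormedAddCommGroup V] [NormedSpace ℂ V]
    (S : V →L[ℂ] V) (Γ : V →L[ℂ] (V →L[ℂ] ℂ)) (C : ℝ) (hC : 0 ≤ C)
    (hS : ∀ P : Polynomial ℂ, ‖Polynomial.aeval S P‖ ≤ supCircle P)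
    (hHankel : ∀ (φ : Polynomial ℂ) (g h : V),
      Γ ((Polynomial.aeval S φ) g) h = Γ g ((Polynomial.aeval S φ) h))
    (hΓ : ∀ P : Polynomial ℂ,
      ‖Γ.comp (Polynomial.aeval S (derivative P))‖ ≤ C * supCircle P) :
    ∀ P : Polynomial ℂ,
      ‖Polynomial.aeval (TGamma S Γ) P‖ ≤ (1 + C) * supCircle P := by
  intro P
  have hsup : (0:ℝ) ≤ supCircle P := le_trans (norm_nonneg _) (hS P)
  refine ContinuousLinearMap.opNorm_le_bound _ (by positivity) ?_
  rintro ⟨f, g⟩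
  rw [key S Γ hHankel P f g, Prod.norm_def]
  dsimp only
  have hf : ‖f‖ ≤ ‖(f, g)‖ := by rw [Prod.norm_def]; exact le_max_left _ _
  have hg : ‖g‖ ≤ ‖(f, g)‖ := by rw [Prod.norm_def]; exact le_max_right _ _
  have hx : (0:ℝ) ≤ ‖(f, g)‖ := norm_nonneg _
  have hPS : ‖Polynomial.aeval S P‖ ≤ supCircle P := hS P
  have h2 : ‖(Polynomial.aeval S P) g‖ ≤ (1 + C) * supCircle P * ‖(f, g)‖ := by
    calc ‖(Polynomial.aeval S P) g‖ ≤ ‖Polynomial.aeval S P‖ * ‖g‖ :=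
          ContinuousLinearMap.le_opNorm _ _
      _ ≤ (1 + C) * supCircle P * ‖(f, g)‖ := by
          have h4 := norm_nonneg g
          have h5 := mul_le_mul hPS hg h4 hsup
          have h6 := mul_nonneg (mul_nonneg hC hsup) hx
          nlinarith
  refine max_le ?_ h2
  have h3 : Γ ((Polynomial.aeval S (derivative P)) g)
      = (Γ.comp (Polynomial.aeval S (derivative P))) g := rfl
  calc ‖f.comp (Polynomial.aeval S P) + Γ ((Polynomial.aeval S (derivative P)) g)‖
      ≤ ‖f.comp (Polynomial.aeval S P)‖
        + ‖(Γ.comp (Polynomial.aeval S (derivative P))) g‖ := by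
        rw [h3]; exact norm_add_le _ _
    _ ≤ ‖f‖ * ‖Polynomial.aeval S P‖
        + ‖Γ.comp (Polynomial.aeval S (derivative P))‖ * ‖g‖ :=
        add_le_add (ContinuousLinearMap.opNorm_comp_le _ _)
          (ContinuousLinearMap.le_opNorm _ _)
    _ ≤ (1 + C) * supCircle P * ‖(f, g)‖ := by
        have h4 := hΓ P
        have h6 := norm_nonneg g
        have h7 := norm_nonneg (Polynomial.aeval S P)
        have h8 := mul_le_mul hf hPS h7 hx
        have h9 := mul_le_mul h4 hg h6 (by positivity : (0:ℝ) ≤ C * supCircle P)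
        nlinarith
end

section
/- Let C_1, …, C_n be d×d complex matrices satisfying the CAR relations C_iC_j + C_jC_i = 0 and C_i*C_j + C_jC_i* = δ_{ij}·I. Then ‖Σ_{k=1}^n C_k ⊗ C̄_k‖ ≥ n/2, where C̄_k denotes the entrywise complex conjugate matrix. -/
/-!
Test the operator against the unnormalised maximally entangled vector `Ω = vec 1 = Σᵢ eᵢ ⊗ eᵢ`,
for which `‖Ω‖² = d`. For every matrix `A` one has `⟪Ω, (A ⊗ Ā) Ω⟫ = tr (A A*)`, and the relation
`C*C + CC* = 1` forces `tr (C C*) = d / 2`. Hence, for `M = Σₖ Cₖ ⊗ C̄ₖ`,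
`n d / 2 = ⟪Ω, M Ω⟫ ≤ ‖M‖ ‖Ω‖² = ‖M‖ d`.
-/

open Kronecker Matrix

theorem Matrix.two_mul_trace_mul_conjTranspose_eq_card {R n : Type*} [CommRing R] [StarRing R]
    [Fintype n] [DecidableEq n] {A : Matrix n n R} (h : Aᴴ * A + A * Aᴴ = 1) :
    2 * (A * Aᴴ).trace = Fintype.card n := by
  have := congrArg trace h
  rwa [trace_add, trace_mul_comm Aᴴ, trace_one, ← two_mul] at this

theorem Matrix.vec_one_dotProduct_kronecker_map_mulVec_vec_one {R n : Type*} [CommRing R]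
    [StarRing R] [Fintype n] [DecidableEq n] (A : Matrix n n R) :
    vec 1 ⬝ᵥ (A ⊗ₖ A.map (starRingEnd R)) *ᵥ vec 1 = (A * Aᴴ).trace := by
  rw [kronecker_mulVec_vec, vec_dotProduct_vec, transpose_one, Matrix.one_mul, Matrix.mul_one,
    ← trace_transpose, transpose_mul, conjTranspose, transpose_map, transpose_transpose]
  rfl

theorem ContinuousLinearMap.re_inner_apply_self_le {𝕜 E : Type*} [RCLike 𝕜]
    [NormedAddCommGroup E] [InnerProductSpace 𝕜 E] (T : E →L[𝕜] E) (x : E) :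
    RCLike.re (inner 𝕜 x (T x)) ≤ ‖T‖ * ‖x‖ ^ 2 :=
  calc RCLike.re (inner 𝕜 x (T x)) ≤ ‖x‖ * ‖T x‖ :=
        (RCLike.re_le_norm _).trans (norm_inner_le_norm _ _)
    _ ≤ ‖x‖ * (‖T‖ * ‖x‖) := by gcongr; exact T.le_opNorm x
    _ = ‖T‖ * ‖x‖ ^ 2 := by ring

theorem Matrix.re_vec_one_dotProduct_mulVec_vec_one_le {𝕜 n : Type*} [RCLike 𝕜] [Fintype n]
    [DecidableEq n] (M : Matrix (n × n) (n × n) 𝕜) :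
    RCLike.re (vec 1 ⬝ᵥ M *ᵥ vec 1) ≤ ‖toEuclideanCLM (𝕜 := 𝕜) M‖ * Fintype.card n := by
  have hstar : star (vec (1 : Matrix n n 𝕜)) = vec 1 := by
    rw [star_vec, Matrix.map_one _ (star_zero 𝕜) (star_one 𝕜)]
  have hnorm : ‖WithLp.toLp 2 (vec (1 : Matrix n n 𝕜))‖ ^ 2 = Fintype.card n := by
    rw [← inner_self_eq_norm_sq (𝕜 := 𝕜), EuclideanSpace.inner_toLp_toLp, hstar,
      vec_dotProduct_vec, transpose_one, Matrix.one_mul, trace_one]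
    simp
  have := (toEuclideanCLM (𝕜 := 𝕜) M).re_inner_apply_self_le (WithLp.toLp 2 (vec 1))
  rwa [toEuclideanCLM_toLp, EuclideanSpace.inner_toLp_toLp, hstar, dotProduct_comm, hnorm] at this

theorem car_tensor_conj_lower_bound_general
    (n d : ℕ) (hd : 0 < d) (C : Fin n → Matrix (Fin d) (Fin d) ℂ)
    (hCAR₂ : ∀ i j, star (C i) * C j + C j * star (C i) =
      if i = j then (1 : Matrix (Fin d) (Fin d) ℂ) else 0) :
    (n : ℝ) / 2 ≤
      ‖Matrix.toEuclideanCLM (𝕜 := ℂ)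
        (∑ k, (C k) ⊗ₖ ((C k).map (starRingEnd ℂ)))‖ := by
  have htrace (k : Fin n) : (C k * (C k)ᴴ).trace = d / 2 := by
    have h := two_mul_trace_mul_conjTranspose_eq_card
      (by simpa [star_eq_conjTranspose] using hCAR₂ k k)
    rw [Fintype.card_fin] at h
    linear_combination h / 2
  have hsum : vec 1 ⬝ᵥ (∑ k, (C k) ⊗ₖ ((C k).map (starRingEnd ℂ))) *ᵥ vec 1 =
      ((n / 2 * d : ℝ) : ℂ) := by
    simp only [sum_mulVec, dotProduct_sum, vec_one_dotProduct_kronecker_map_mulVec_vec_one, htrace]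
    push_cast
    simp only [Finset.sum_const, Finset.card_univ, Fintype.card_fin, nsmul_eq_mul]
    ring
  have hbound := re_vec_one_dotProduct_mulVec_vec_one_le
    (∑ k, (C k) ⊗ₖ ((C k).map (starRingEnd ℂ)))
  rw [hsum, Fintype.card_fin, RCLike.re_to_complex, Complex.ofReal_re] at hbound
  exact le_of_mul_le_mul_right hbound (by exact_mod_cast hd)

/-- If `C₁, …, Cₙ` are `d × d` matrices satisfying the CAR relations, then
`‖Σ_k C_k ⊗ C̄_k‖ ≥ n / 2`, the norm being the operator norm on `ℂ^d ⊗ ℂ^d ≅ ℂ^{d²}`. -/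
theorem car_tensor_conj_lower_bound
    (n d : ℕ) (hd : 0 < d) (C : Fin n → Matrix (Fin d) (Fin d) ℂ)
    (hCAR₁ : ∀ i j, C i * C j + C j * C i = 0)
    (hCAR₂ : ∀ i j, star (C i) * C j + C j * star (C i) =
      if i = j then (1 : Matrix (Fin d) (Fin d) ℂ) else 0) :
    (n : ℝ) / 2 ≤
      ‖Matrix.toEuclideanCLM (𝕜 := ℂ)
        (∑ k, (C k) ⊗ₖ ((C k).map (starRingEnd ℂ)))‖ :=
  car_tensor_conj_lower_bound_general n d hd C hCAR₂
end

section
/- Let (f_n)_{n≥0} be a Hardy martingale with values in a Hilbert space on Ω = 𝕋^ℕ with the coordinate filtration (i.e., f_n = E(f | A_n) and f_n depends analytically on the n-th coordinate Z_n). Then for any p > 0, the sequence (‖f_n‖^p)_{n≥0} is a submartingale. -/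
open MeasureTheory

instance : Fact (0 < 2 * Real.pi) := ⟨Real.two_pi_pos⟩

/-!
For `p ≥ 1` the inequality `‖∫ g‖ ^ p ≤ ∫ ‖g‖ ^ p` over the last coordinate is Jensen's
inequality. For `p < 1` analyticity is essential. Pairing `g` with its mean `I` gives the scalar
analytic function `⟪I, g⟫` with mean `‖I‖²`, so it suffices to treat `h : 𝕋 → ℂ`.
For an analytic polynomial `Q`, `‖Q 0‖` is at most the Mahler measure
`M(Q) = exp (avg log ‖Q‖)`, and `M(Q) ^ p ≤ avg ‖Q‖ ^ p` by Jensen's inequality for `exp`.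
A general `h` is the `L²`-limit of its Fourier partial sums, which are analytic polynomials with
constant term `∫ h`; for `p ≤ 1` the quantity `∫ ‖·‖ ^ p` passes to this limit because
`‖a‖ ^ p ≤ ‖b‖ ^ p + ‖a - b‖ ^ p` and `∫ ‖u‖ ^ p ≤ ‖u‖₂ ^ p`.
-/

open Real AddCircle Polynomial Filter Topology
open scoped InnerProductSpace

namespace MeasureTheory

variable {α E : Type*} [MeasurableSpace α] {μ : Measure α} [NormedAddCommGroup E] {p : ℝ}

theorem MemLp.integrable_norm_rpow_of_le [IsFiniteMeasure μ] {f : α → E} {q : ENNReal}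
    (hf : MemLp f q μ) (hp : 0 ≤ p) (hpq : ENNReal.ofReal p ≤ q) :
    Integrable (fun x ↦ ‖f x‖ ^ p) μ := by
  simpa [hp] using (hf.mono_exponent hpq).integrable_norm_rpow'

theorem Lp.integral_norm_rpow_le_norm_rpow [IsProbabilityMeasure μ] (F : Lp E 2 μ) (hp : 0 < p)
    (hp2 : p ≤ 2) : ∫ x, ‖F x‖ ^ p ∂μ ≤ ‖F‖ ^ p := by
  have hp2' : ENNReal.ofReal p ≤ 2 := by simpa using ENNReal.ofReal_le_ofReal hp2
  have hmono := eLpNorm_le_eLpNorm_of_exponent_le (μ := μ) hp2' (Lp.aestronglyMeasurable F)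
  rwa [((Lp.memLp F).mono_exponent hp2').eLpNorm_eq_integral_rpow_norm (by simpa using hp)
    ENNReal.ofReal_ne_top, ENNReal.ofReal_le_iff_le_toReal (Lp.eLpNorm_ne_top F),
    ENNReal.toReal_ofReal hp.le, ← Lp.norm_def,
    rpow_inv_le_iff_of_pos (integral_nonneg fun _ ↦ by positivity) (norm_nonneg _) hp] at hmono

theorem Lp.integral_norm_rpow_le_add_norm_sub_rpow [IsProbabilityMeasure μ] (F G : Lp E 2 μ)
    (hp : 0 < p) (hp1 : p ≤ 1) :
    ∫ x, ‖F x‖ ^ p ∂μ ≤ ∫ x, ‖G x‖ ^ p ∂μ + ‖F - G‖ ^ p := by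
  have hint : ∀ u : Lp E 2 μ, Integrable (fun x ↦ ‖u x‖ ^ p) μ := fun u ↦
    (Lp.memLp u).integrable_norm_rpow_of_le hp.le
      (by simpa using ENNReal.ofReal_le_ofReal (by linarith : p ≤ 2))
  calc ∫ x, ‖F x‖ ^ p ∂μ ≤ ∫ x, (‖G x‖ ^ p + ‖(F - G) x‖ ^ p) ∂μ := by
        refine integral_mono_ae (hint F) ((hint G).add (hint _)) ?_
        filter_upwards [Lp.coeFn_sub F G] with x hx
        rw [hx, Pi.sub_apply]
        calc ‖F x‖ ^ p ≤ (‖G x‖ + ‖F x - G x‖) ^ p := by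
              gcongr
              exact norm_le_norm_add_norm_sub' (F x) (G x)
          _ ≤ ‖G x‖ ^ p + ‖F x - G x‖ ^ p :=
              rpow_add_le_add_rpow (norm_nonneg _) (norm_nonneg _) hp.le hp1
    _ = ∫ x, ‖G x‖ ^ p ∂μ + ∫ x, ‖(F - G) x‖ ^ p ∂μ := integral_add (hint G) (hint _)
    _ ≤ ∫ x, ‖G x‖ ^ p ∂μ + ‖F - G‖ ^ p := by
        gcongr
        exact Lp.integral_norm_rpow_le_norm_rpow _ hp (by linarith)

theorem norm_integral_rpow_le_integral_norm_rpow_of_one_le [IsProbabilityMeasure μ]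
    [NormedSpace ℝ E] {g : α → E} (hg : Integrable g μ)
    (hgp : Integrable (fun x ↦ ‖g x‖ ^ p) μ) (hp : 1 ≤ p) :
    ‖∫ x, g x ∂μ‖ ^ p ≤ ∫ x, ‖g x‖ ^ p ∂μ :=
  calc ‖∫ x, g x ∂μ‖ ^ p ≤ (∫ x, ‖g x‖ ∂μ) ^ p := by
        gcongr
        exact norm_integral_le_integral_norm g
    _ ≤ ∫ x, ‖g x‖ ^ p ∂μ :=
        (convexOn_rpow hp).map_integral_le
          (continuousOn_id.rpow_const fun _ _ ↦ Or.inr (by linarith)) isClosed_Ici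
          (ae_of_all _ fun _ ↦ norm_nonneg _) hg.norm hgp

end MeasureTheory

theorem Real.circleAverage_zero_one_eq_integral_haarAddCircle {E : Type*} [NormedAddCommGroup E]
    [NormedSpace ℝ E] (g : ℂ → E) :
    circleAverage g 0 1 = ∫ z : AddCircle (2 * π), g z.toCircle ∂haarAddCircle := by
  rw [AddCircle.integral_haarAddCircle, Real.circleAverage,
    ← AddCircle.intervalIntegral_preimage (2 * π) 0]
  simp [toCircle, circleMap]

namespace Polynomial

theorem toAddCircle_apply (Q : ℂ[X]) (z : AddCircle (2 * π)) :
    Q.toAddCircle z = Q.eval (z.toCircle : ℂ) := by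
  simp [toAddCircle]

theorem norm_coeff_zero_le_mahlerMeasure (Q : ℂ[X]) : ‖Q.coeff 0‖ ≤ Q.mahlerMeasure := by
  simpa using Q.norm_coeff_le_choose_mul_mahlerMeasure 0

-- `Q` has finitely many roots and `circleMap 0 1` is injective on one period.
theorem ae_norm_eval_circleMap_pos {Q : ℂ[X]} (hQ : Q ≠ 0) :
    ∀ᵐ θ ∂volume.restrict (Set.uIoc 0 (2 * π)), 0 < ‖Q.eval (circleMap 0 1 θ)‖ := by
  rw [ae_restrict_iff' measurableSet_uIoc]
  refine Set.Finite.measure_zero ?_ _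
  simp only [norm_pos_iff, ne_eq, Set.compl_ofPred, Classical.not_imp, Decidable.not_not]
  refine Set.Finite.of_finite_image (f := circleMap 0 1) (Q.roots.finite_toSet.subset ?_) ?_
  · rintro z ⟨θ, ⟨_, heval⟩, rfl⟩
    exact (mem_roots hQ).mpr heval
  · grw [Set.ofPred_and, Set.inter_subset_left]
    exact injOn_circleMap_of_abs_sub_le one_ne_zero (by simp [abs_of_pos pi_pos])

theorem mahlerMeasure_rpow_le_circleAverage (Q : ℂ[X]) {p : ℝ} (hp : 0 < p) :
    Q.mahlerMeasure ^ p ≤ circleAverage (fun z ↦ ‖Q.eval z‖ ^ p) 0 1 := by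
  rcases eq_or_ne Q 0 with rfl | hQ
  · rw [mahlerMeasure_zero, zero_rpow hp.ne']
    exact circleAverage_nonneg_of_nonneg fun _ _ ↦ by positivity
  have : IsFiniteMeasure (volume.restrict (Set.uIoc 0 (2 * π))) := by
    rw [Set.uIoc_of_le (by positivity)]
    infer_instance
  have : NeZero (volume (Set.uIoc 0 (2 * π))) := ⟨by simp⟩
  have hpow : (fun θ ↦ exp (p * log ‖Q.eval (circleMap 0 1 θ)‖))
      =ᵐ[volume.restrict (Set.uIoc 0 (2 * π))] fun θ ↦ ‖Q.eval (circleMap 0 1 θ)‖ ^ p := by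
    filter_upwards [ae_norm_eval_circleMap_pos hQ] with θ hθ
    rw [mul_comm, ← rpow_def_of_pos hθ]
  rw [mahlerMeasure, if_pos hQ, ← exp_mul, logMahlerMeasure, circleAverage_eq_intervalAverage,
    circleAverage_eq_intervalAverage, mul_comm, average_eq, smul_eq_mul, ← mul_assoc,
    mul_comm p, mul_assoc, ← integral_const_mul, ← smul_eq_mul, ← average_eq]
  calc exp (⨍ θ in Set.uIoc 0 (2 * π), p * log ‖Q.eval (circleMap 0 1 θ)‖)
      ≤ ⨍ θ in Set.uIoc 0 (2 * π), exp (p * log ‖Q.eval (circleMap 0 1 θ)‖) := by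
        refine convexOn_exp.map_average_le continuousOn_exp isClosed_univ (by simp) ?_ ?_
        · rw [Set.uIoc_of_le (by positivity)]
          exact ((analyticOnNhd_id.aeval_polynomial Q).meromorphicOn.circleIntegrable_log_norm).1
            |>.const_mul p
        · exact (integrable_congr hpow).mpr
            ((by fun_prop : Continuous fun θ ↦ ‖Q.eval (circleMap 0 1 θ)‖).rpow_const
              fun _ ↦ Or.inr hp.le).integrableOn_uIoc
    _ = ⨍ θ in Set.uIoc 0 (2 * π), ‖Q.eval (circleMap 0 1 θ)‖ ^ p := average_congr hpow

theorem norm_coeff_zero_rpow_le_integral (Q : ℂ[X]) {p : ℝ} (hp : 0 < p) :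
    ‖Q.coeff 0‖ ^ p ≤ ∫ z, ‖Q.toAddCircle z‖ ^ p ∂haarAddCircle :=
  calc ‖Q.coeff 0‖ ^ p ≤ Q.mahlerMeasure ^ p := by
        gcongr
        exact Q.norm_coeff_zero_le_mahlerMeasure
    _ ≤ circleAverage (fun z ↦ ‖Q.eval z‖ ^ p) 0 1 := Q.mahlerMeasure_rpow_le_circleAverage hp
    _ = ∫ z, ‖Q.toAddCircle z‖ ^ p ∂haarAddCircle := by
        simp [circleAverage_zero_one_eq_integral_haarAddCircle, toAddCircle_apply]

end Polynomial

theorem fourierCoeff_continuousLinearMap_comp {T : ℝ} [Fact (0 < T)] {E F : Type*}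
    [NormedAddCommGroup E] [NormedSpace ℂ E] [CompleteSpace E] [NormedAddCommGroup F]
    [NormedSpace ℂ F] [CompleteSpace F] (L : E →L[ℂ] F) {g : AddCircle T → E}
    (hg : Integrable g haarAddCircle) (n : ℤ) :
    fourierCoeff (fun z ↦ L (g z)) n = L (fourierCoeff g n) := by
  simp only [fourierCoeff, ← map_smul]
  exact L.integral_comp_comm <| hg.bdd_smul 1 (fourier (-n)).continuous.aestronglyMeasurable
    (ae_of_all _ fun _ ↦ (Circle.norm_coe _).le)

noncomputable def fourierPartialSumPolynomial (h : AddCircle (2 * π) → ℂ) (N : ℕ) : ℂ[X] :=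
  ∑ n ∈ Finset.range N, monomial n (fourierCoeff h n)

theorem toAddCircle_fourierPartialSumPolynomial (h : AddCircle (2 * π) → ℂ) (N : ℕ) :
    (fourierPartialSumPolynomial h N).toAddCircle =
      ∑ n ∈ Finset.range N, fourierCoeff h n • fourier (n : ℤ) := by
  simp [fourierPartialSumPolynomial, toAddCircle_monomial_eq_smul_fourier]

theorem coeff_zero_fourierPartialSumPolynomial (h : AddCircle (2 * π) → ℂ) {N : ℕ}
    (hN : 0 < N) : (fourierPartialSumPolynomial h N).coeff 0 = ∫ z, h z ∂haarAddCircle := by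
  simp [fourierPartialSumPolynomial, coeff_monomial, hN, fourierCoeff]

theorem tendsto_toLp_fourierPartialSumPolynomial {h : AddCircle (2 * π) → ℂ}
    (hh : MemLp h 2 haarAddCircle) (hneg : ∀ n : ℤ, n < 0 → fourierCoeff h n = 0) :
    Tendsto (fun N ↦ (fourierPartialSumPolynomial h N).toAddCircle.toLp 2 haarAddCircle ℂ)
      atTop (𝓝 (hh.toLp h)) := by
  have hsum := hasSum_fourier_series_L2 (hh.toLp h)
  simp_rw [fourierCoeff_congr_ae hh.coeFn_toLp] at hsum
  rw [← Nat.cast_injective.hasSum_iff] at hsum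
  · convert hsum.tendsto_sum_nat using 2 with N
    simp [toAddCircle_fourierPartialSumPolynomial, fourierLp]
  · intro n hn
    rw [hneg n (by simpa using hn), zero_smul]

namespace AddCircle

theorem norm_integral_rpow_le_integral_norm_rpow_of_le_one {h : AddCircle (2 * π) → ℂ}
    (hh : MemLp h 2 haarAddCircle) (hneg : ∀ n : ℤ, n < 0 → fourierCoeff h n = 0) {p : ℝ}
    (hp : 0 < p) (hp1 : p ≤ 1) :
    ‖∫ z, h z ∂haarAddCircle‖ ^ p ≤ ∫ z, ‖h z‖ ^ p ∂haarAddCircle := by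
  set F := hh.toLp h
  set P := fun N ↦ (fourierPartialSumPolynomial h N).toAddCircle
  have hbound : ∀ N, 0 < N → ‖∫ z, h z ∂haarAddCircle‖ ^ p
      ≤ ∫ z, ‖h z‖ ^ p ∂haarAddCircle + ‖(P N).toLp 2 haarAddCircle ℂ - F‖ ^ p := by
    intro N hN
    calc ‖∫ z, h z ∂haarAddCircle‖ ^ p = ‖(fourierPartialSumPolynomial h N).coeff 0‖ ^ p := by
          rw [coeff_zero_fourierPartialSumPolynomial h hN]
      _ ≤ ∫ z, ‖P N z‖ ^ p ∂haarAddCircle := norm_coeff_zero_rpow_le_integral _ hp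
      _ = ∫ z, ‖(P N).toLp 2 haarAddCircle ℂ z‖ ^ p ∂haarAddCircle := by
          refine integral_congr_ae ?_
          filter_upwards [ContinuousMap.coeFn_toLp (p := 2) (𝕜 := ℂ) haarAddCircle (P N)]
            with z hz
          rw [hz]
      _ ≤ ∫ z, ‖F z‖ ^ p ∂haarAddCircle + ‖(P N).toLp 2 haarAddCircle ℂ - F‖ ^ p :=
          Lp.integral_norm_rpow_le_add_norm_sub_rpow _ _ hp hp1
      _ = ∫ z, ‖h z‖ ^ p ∂haarAddCircle + ‖(P N).toLp 2 haarAddCircle ℂ - F‖ ^ p := by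
          congr 1
          refine integral_congr_ae ?_
          filter_upwards [hh.coeFn_toLp] with z hz
          rw [hz]
  have hlim : Tendsto (fun N ↦ ∫ z, ‖h z‖ ^ p ∂haarAddCircle
      + ‖(P N).toLp 2 haarAddCircle ℂ - F‖ ^ p) atTop (𝓝 (∫ z, ‖h z‖ ^ p ∂haarAddCircle)) := by
    have := (tendsto_iff_norm_sub_tendsto_zero.1
      (tendsto_toLp_fourierPartialSumPolynomial hh hneg)).rpow_const (p := p) (Or.inr hp.le)
    simpa [zero_rpow hp.ne'] using tendsto_const_nhds.add this
  exact ge_of_tendsto hlim (eventually_atTop.2 ⟨1, hbound⟩)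

theorem norm_integral_rpow_le_integral_norm_rpow {H : Type*} [NormedAddCommGroup H]
    [InnerProductSpace ℂ H] [CompleteSpace H] {g : AddCircle (2 * π) → H}
    (hg : MemLp g ⊤ haarAddCircle) (hneg : ∀ n : ℤ, n < 0 → fourierCoeff g n = 0) {p : ℝ}
    (hp : 0 < p) : ‖∫ z, g z ∂haarAddCircle‖ ^ p ≤ ∫ z, ‖g z‖ ^ p ∂haarAddCircle := by
  have hgint : Integrable g haarAddCircle := hg.integrable le_top
  have hgp : Integrable (fun z ↦ ‖g z‖ ^ p) haarAddCircle :=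
    hg.integrable_norm_rpow_of_le hp.le le_top
  rcases le_or_gt 1 p with hp1 | hp1
  · exact norm_integral_rpow_le_integral_norm_rpow_of_one_le hgint hgp hp1
  set I := ∫ z, g z ∂haarAddCircle
  rcases eq_or_ne I 0 with hI | hI
  · rw [hI, norm_zero, zero_rpow hp.ne']
    exact integral_nonneg fun _ ↦ by positivity
  set h : AddCircle (2 * π) → ℂ := fun z ↦ ⟪I, g z⟫_ℂ
  have hh : MemLp h ⊤ haarAddCircle := hg.const_inner I
  have hhneg : ∀ n : ℤ, n < 0 → fourierCoeff h n = 0 := fun n hn ↦ by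
    rw [show h = fun z ↦ innerSL ℂ I (g z) from rfl,
      fourierCoeff_continuousLinearMap_comp _ hgint, hneg n hn, map_zero]
  have hmean : ‖∫ z, h z ∂haarAddCircle‖ = ‖I‖ ^ 2 := by
    rw [integral_inner hgint, inner_self_eq_norm_sq_to_K]
    simp
  refine le_of_mul_le_mul_left ?_ (by positivity : 0 < ‖I‖ ^ p)
  calc ‖I‖ ^ p * ‖I‖ ^ p = ‖∫ z, h z ∂haarAddCircle‖ ^ p := by
        rw [hmean, sq, mul_rpow (norm_nonneg _) (norm_nonneg _)]
    _ ≤ ∫ z, ‖h z‖ ^ p ∂haarAddCircle :=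
        norm_integral_rpow_le_integral_norm_rpow_of_le_one (hh.mono_exponent le_top) hhneg hp
          hp1.le
    _ ≤ ∫ z, ‖I‖ ^ p * ‖g z‖ ^ p ∂haarAddCircle := by
        refine integral_mono (hh.integrable_norm_rpow_of_le hp.le le_top) (hgp.const_mul _)
          fun z ↦ ?_
        rw [← mul_rpow (norm_nonneg _) (norm_nonneg _)]
        gcongr
        exact norm_inner_le_norm I (g z)
    _ = ‖I‖ ^ p * ∫ z, ‖g z‖ ^ p ∂haarAddCircle := integral_const_mul _ _

end AddCircle

theorem hardy_martingale_submartingale_general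
    {H : Type*} [NormedAddCommGroup H] [InnerProductSpace ℂ H] [CompleteSpace H]
    (f : ℕ → (ℕ → AddCircle (2 * Real.pi)) → H)
    (h_bdd : ∀ n : ℕ, ∃ B : ℝ, ∀ ω, ‖f n ω‖ ≤ B)
    (h_meas : ∀ (n : ℕ) (ω : ℕ → AddCircle (2 * Real.pi)),
      AEStronglyMeasurable (fun z => f (n + 1) (Function.update ω n z))
        AddCircle.haarAddCircle)
    (h_mart : ∀ (n : ℕ) (ω : ℕ → AddCircle (2 * Real.pi)),
      ∫ z, f (n + 1) (Function.update ω n z) ∂AddCircle.haarAddCircle = f n ω)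
    (h_analytic : ∀ (n : ℕ) (ω : ℕ → AddCircle (2 * Real.pi)) (k : ℤ), k < 0 →
      ∫ z, fourier (-k) z • f (n + 1) (Function.update ω n z) ∂AddCircle.haarAddCircle = 0)
    (p : ℝ) (hp : 0 < p) :
    ∀ (n : ℕ) (ω : ℕ → AddCircle (2 * Real.pi)),
      ‖f n ω‖ ^ p ≤
        ∫ z, ‖f (n + 1) (Function.update ω n z)‖ ^ p ∂AddCircle.haarAddCircle := by
  intro n ω
  obtain ⟨B, hB⟩ := h_bdd (n + 1)
  rw [← h_mart n ω]
  exact norm_integral_rpow_le_integral_norm_rpow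
    (memLp_top_of_bound (h_meas n ω) B (ae_of_all _ fun _ ↦ hB _)) (h_analytic n ω) hp

/-- Let `(fₙ)` be a Hardy martingale on `Ω = 𝕋^ℕ` with values in a Hilbert space, for the
coordinate filtration: `fₙ` depends only on the first `n` coordinates, is bounded and
measurable, satisfies the martingale property (integrating out the last coordinate recovers
`f_{n-1}`), and each `fₙ` is analytic in its last coordinate (negative Fourier coefficients
vanish).  Then for any `p > 0` the sequence `(‖fₙ‖ᵖ)` is a submartingale; concretely, the
conditional expectation over the last coordinate dominates `‖f_{n-1}‖ᵖ` pointwise. -/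
theorem hardy_martingale_submartingale
    {H : Type*} [NormedAddCommGroup H] [InnerProductSpace ℂ H] [CompleteSpace H]
    (f : ℕ → (ℕ → AddCircle (2 * Real.pi)) → H)
    (h_adapted : ∀ (n : ℕ) (ω ω' : ℕ → AddCircle (2 * Real.pi)),
      (∀ i < n, ω i = ω' i) → f n ω = f n ω')
    (h_bdd : ∀ n : ℕ, ∃ B : ℝ, ∀ ω, ‖f n ω‖ ≤ B)
    (h_meas : ∀ (n : ℕ) (ω : ℕ → AddCircle (2 * Real.pi)),
      AEStronglyMeasurable (fun z => f (n + 1) (Function.update ω n z))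
        AddCircle.haarAddCircle)
    (h_mart : ∀ (n : ℕ) (ω : ℕ → AddCircle (2 * Real.pi)),
      ∫ z, f (n + 1) (Function.update ω n z) ∂AddCircle.haarAddCircle = f n ω)
    (h_analytic : ∀ (n : ℕ) (ω : ℕ → AddCircle (2 * Real.pi)) (k : ℤ), k < 0 →
      ∫ z, fourier (-k) z • f (n + 1) (Function.update ω n z) ∂AddCircle.haarAddCircle = 0)
    (p : ℝ) (hp : 0 < p) :
    ∀ (n : ℕ) (ω : ℕ → AddCircle (2 * Real.pi)),
      ‖f n ω‖ ^ p ≤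
        ∫ z, ‖f (n + 1) (Function.update ω n z)‖ ^ p ∂AddCircle.haarAddCircle :=
  hardy_martingale_submartingale_general f h_bdd h_meas h_mart h_analytic p hp
end

section
/- For F holomorphic on the unit disc, continuous on its closure, with F(0) = 0, and 0 ≤ r < s < 1, |z| = r, the derivative satisfies F'(z)·s·(1 − |z|²/s²) = ∫_𝕋 ξ̄·[F(s·φ_{z/s}(ξ)) − F(z)] dm(ξ), where φ_w(ζ) = (ζ + w)/(1 + w̄ζ) is the Möbius transformation and m is normalized Lebesgue measure on 𝕋. -/
/-! With `w = z / s`, the function `G ξ = F (s · φ_w ξ)` is holomorphic on a neighbourhood of the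
closed unit disc, because `φ_w` maps that disc into itself and `s < 1`. By the chain rule
`G'(0) = F'(z) · s · (1 - |w|²)`, and Cauchy's formula for the derivative of `G - F z` at `0`,
written out on the parametrised circle, is the stated first Fourier coefficient identity. -/

open Complex intervalIntegral Metric ComplexConjugate

noncomputable def mobius (w ξ : ℂ) : ℂ := (ξ + w) / (1 + conj w * ξ)

lemma one_add_conj_mul_ne_zero {w ξ : ℂ} (hw : ‖w‖ < 1) (hξ : ‖ξ‖ ≤ 1) :
    1 + conj w * ξ ≠ 0 := by
  intro h
  have hlt : ‖conj w * ξ‖ < 1 := by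
    rw [norm_mul, RCLike.norm_conj]
    nlinarith [norm_nonneg w, norm_nonneg ξ]
  rw [eq_neg_of_add_eq_zero_right h, norm_neg, norm_one] at hlt
  exact lt_irrefl _ hlt

lemma norm_add_le_norm_one_add_conj_mul {w ξ : ℂ} (hw : ‖w‖ ≤ 1) (hξ : ‖ξ‖ ≤ 1) :
    ‖ξ + w‖ ≤ ‖1 + conj w * ξ‖ := by
  have hw2 : normSq w ≤ 1 := by rw [normSq_eq_norm_sq]; nlinarith [norm_nonneg w]
  have hξ2 : normSq ξ ≤ 1 := by rw [normSq_eq_norm_sq]; nlinarith [norm_nonneg ξ]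
  have key : normSq (1 + conj w * ξ) - normSq (ξ + w) = (1 - normSq w) * (1 - normSq ξ) := by
    simp only [normSq_apply, add_re, add_im, mul_re, mul_im, conj_re, conj_im, one_re, one_im]
    ring
  rw [norm_def, norm_def]
  exact Real.sqrt_le_sqrt (by nlinarith)

lemma norm_mobius_le_one {w ξ : ℂ} (hw : ‖w‖ < 1) (hξ : ‖ξ‖ ≤ 1) : ‖mobius w ξ‖ ≤ 1 := by
  rw [mobius, norm_div, div_le_one (norm_pos_iff.2 (one_add_conj_mul_ne_zero hw hξ))]
  exact norm_add_le_norm_one_add_conj_mul hw.le hξ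

lemma mobius_zero (w : ℂ) : mobius w 0 = w := by simp [mobius]

lemma hasDerivAt_mobius {w ξ : ℂ} (hden : 1 + conj w * ξ ≠ 0) :
    HasDerivAt (mobius w) ((1 - w * conj w) / (1 + conj w * ξ) ^ 2) ξ := by
  have hnum : HasDerivAt (fun ξ => ξ + w) 1 ξ := (hasDerivAt_id ξ).add_const w
  have hden' : HasDerivAt (fun ξ => 1 + conj w * ξ) (conj w) ξ := by
    simpa using ((hasDerivAt_id ξ).const_mul (conj w)).const_add 1
  exact (hnum.div hden' hden).congr_deriv (by ring)

lemma differentiableOn_comp_mul_mobius {F : ℂ → ℂ} (hF : DifferentiableOn ℂ F (ball 0 1))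
    {a w : ℂ} (ha : ‖a‖ < 1) (hw : ‖w‖ < 1) :
    DifferentiableOn ℂ (fun ξ => F (a * mobius w ξ)) (closedBall 0 1) := by
  intro ξ hξ
  rw [mem_closedBall_zero_iff] at hξ
  have hmem : a * mobius w ξ ∈ ball (0 : ℂ) 1 := by
    rw [mem_ball_zero_iff, norm_mul]
    nlinarith [norm_mobius_le_one hw hξ, norm_nonneg a, norm_nonneg (mobius w ξ)]
  have hφ := (hasDerivAt_mobius (one_add_conj_mul_ne_zero hw hξ)).differentiableAt
  exact ((hF.differentiableAt (isOpen_ball.mem_nhds hmem)).comp ξ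
    (hφ.const_mul a)).differentiableWithinAt

lemma deriv_zero_eq_integral_exp_neg_mul {G : ℂ → ℂ}
    (hG : DifferentiableOn ℂ G (closedBall 0 1)) :
    deriv G 0 = (1 / (2 * Real.pi)) •
      ∫ θ in (0 : ℝ)..(2 * Real.pi), exp (-(θ * I)) * G (exp (θ * I)) := by
  have hcauchy := hG.deriv_eq_smul_circleIntegral one_pos
  have hintegrand : ∀ θ : ℝ, deriv (circleMap 0 1) θ • ((1 / (circleMap 0 1 θ - 0) ^ 2) •
      G (circleMap 0 1 θ)) = I * (exp (-(θ * I)) * G (exp (θ * I))) := by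
    intro θ
    rw [deriv_circleMap]
    simp only [circleMap_zero, smul_eq_mul, sub_zero, ofReal_one, one_mul, exp_neg]
    field_simp [exp_ne_zero]
  rw [circleIntegral] at hcauchy
  simp only [hintegrand, integral_const_mul] at hcauchy
  have hpi : (Real.pi : ℂ) ≠ 0 := ofReal_ne_zero.2 Real.pi_ne_zero
  rw [smul_eq_mul] at hcauchy
  rw [Complex.real_smul]
  push_cast
  field_simp
  exact mul_left_cancel₀ I_ne_zero (by linear_combination -hcauchy)

lemma hasDerivAt_comp_mul_mobius_zero {F : ℂ → ℂ} {a w : ℂ}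
    (hF : DifferentiableAt ℂ F (a * w)) :
    HasDerivAt (fun ξ => F (a * mobius w ξ)) (deriv F (a * w) * (a * (1 - w * conj w))) 0 := by
  have hφ := hasDerivAt_mobius (w := w) (ξ := 0) (by simp)
  simp only [mul_zero, add_zero, one_pow, div_one] at hφ
  exact hF.hasDerivAt.comp_of_eq 0 (hφ.const_mul a) (by rw [mobius_zero])

theorem deriv_mobius_average_formula_general
    (F : ℂ → ℂ)
    (hF : DifferentiableOn ℂ F (Metric.ball (0 : ℂ) 1))
    (r s : ℝ) (hrs : r < s) (hs : s < 1) :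
    ∀ z : ℂ, ‖z‖ = r →
      deriv F z * (s : ℂ) * (1 - ((‖z‖ : ℂ) ^ 2) / (s : ℂ) ^ 2) =
        (1 / (2 * Real.pi)) •
          ∫ θ in (0 : ℝ)..(2 * Real.pi),
            Complex.exp (-(θ * Complex.I)) *
              (F ((s : ℂ) *
                  ((Complex.exp (θ * Complex.I) + z / (s : ℂ)) /
                    (1 + (starRingEnd ℂ) (z / (s : ℂ)) * Complex.exp (θ * Complex.I)))) -
                F z) := by
  intro z hz
  have hs0 : 0 < s := (norm_nonneg z).trans_lt (hz ▸ hrs)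
  have hsC : (s : ℂ) ≠ 0 := ofReal_ne_zero.2 hs0.ne'
  have hw : ‖z / s‖ < 1 := by
    rwa [norm_div, norm_real, Real.norm_of_nonneg hs0.le, hz, div_lt_one hs0]
  have hsw : (s : ℂ) * (z / s) = z := mul_div_cancel₀ z hsC
  have hFz : DifferentiableAt ℂ F (s * (z / s)) := by
    rw [hsw]
    exact hF.differentiableAt (isOpen_ball.mem_nhds (by rw [mem_ball_zero_iff, hz]; linarith))
  have hG := differentiableOn_comp_mul_mobius hF
    (by rwa [norm_real, Real.norm_of_nonneg hs0.le]) hw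
  have hGderiv := hasDerivAt_comp_mul_mobius_zero hFz
  rw [hsw] at hGderiv
  calc deriv F z * s * (1 - (‖z‖ : ℂ) ^ 2 / s ^ 2)
      = deriv (fun ξ => F (s * mobius (z / s) ξ) - F z) 0 := by
        rw [deriv_sub_const, hGderiv.deriv, ← ofReal_pow, ← normSq_eq_norm_sq, ← mul_conj, map_div₀,
          conj_ofReal]
        field_simp
    _ = _ := deriv_zero_eq_integral_exp_neg_mul (hG.sub_const _)

/-- For `F` holomorphic on the unit disc, continuous on its closure, with `F(0) = 0`, and
`0 ≤ r < s < 1`, `|z| = r`: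
`F'(z) · s · (1 − |z|²/s²) = ∫_𝕋 ξ̄ · (F(s φ_{z/s}(ξ)) − F(z)) dm(ξ)`,
where `φ_w(ζ) = (ζ + w)/(1 + w̄ ζ)` and `m` is normalized Lebesgue measure on `𝕋`. -/
theorem deriv_mobius_average_formula
    (F : ℂ → ℂ)
    (hF : DifferentiableOn ℂ F (Metric.ball (0 : ℂ) 1))
    (hFc : ContinuousOn F (Metric.closedBall (0 : ℂ) 1))
    (hF0 : F 0 = 0)
    (r s : ℝ) (hr : 0 ≤ r) (hrs : r < s) (hs : s < 1) :
    ∀ z : ℂ, ‖z‖ = r →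
      deriv F z * (s : ℂ) * (1 - ((‖z‖ : ℂ) ^ 2) / (s : ℂ) ^ 2) =
        (1 / (2 * Real.pi)) •
          ∫ θ in (0 : ℝ)..(2 * Real.pi),
            Complex.exp (-(θ * Complex.I)) *
              (F ((s : ℂ) *
                  ((Complex.exp (θ * Complex.I) + z / (s : ℂ)) /
                    (1 + (starRingEnd ℂ) (z / (s : ℂ)) * Complex.exp (θ * Complex.I)))) -
                F z) :=
  deriv_mobius_average_formula_general F hF r s hrs hs
end
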